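/- Let K be a semiring and (Σ,M) an OP alphabet. If a series S:(Σ,M)^+→K is strictly regular, then S belongs to N(Σ,M,K), i.e., there exist an alphabet Σ', a map h:Σ'→Σ, a one-state restricted weighted OPA B over (Σ',h⁻¹(M)) and K, and an OPL L over (Σ',h⁻¹(M)) such that S = h(⟦B⟧∩L). -/

import Mathlib

namespace WOP

/-- Precedence relations: yields precedence, equal in precedence, takes precedence. -/
inductive PrecRel where
  | lt | eq | gt
deriving DecidableEq

/-- An operator precedence matrix on `Σ ∪ {#}`, where `none` encodes `#`.
It assigns at most one precedence relation to each ordered pair, with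
`# ⋖ a` and `a ⋗ #` for every letter `a`. -/
structure OPM (A : Type) where
  rel : Option A → Option A → Option PrecRel
  hash_lt : ∀ a : A, rel none (some a) = some .lt
  hash_gt : ∀ a : A, rel (some a) none = some .gt

variable {A B K : Type}

/-- The letter of `#w#` at position `i` (positions `0` and `> |w|` carry `#`, i.e. `none`). -/
def letterAt (w : List A) (i : ℕ) : Option A :=
  if i = 0 then none else w[i - 1]?

section ChainRel

variable (M : OPM A) (L : ℕ → Option A)

mutual
  /-- `ChainMid M L k j`: there are `k = k_s < ... < k_m = j` with
  `L k_s ≐ L k_{s+1} ≐ ... ≐ L k_{m-1} ⋗ L k_m` and the gap condition between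
  consecutive elements. -/
  inductive ChainMid : ℕ → ℕ → Prop where
    | last {k j : ℕ} : M.rel (L k) (L j) = some .gt → ChainGap k j → ChainMid k j
    | step {k k' j : ℕ} : M.rel (L k) (L k') = some .eq → ChainGap k k' →
        ChainMid k' j → ChainMid k j

  /-- The gap condition between consecutive elements of a chain:
  adjacent positions or a chain. -/
  inductive ChainGap : ℕ → ℕ → Prop where
    | adj (k : ℕ) : ChainGap k (k + 1)
    | chain {k k' : ℕ} : Chain k k' → ChainGap k k'

  /-- The chain relation `i ⤳ j`: there are positions `i = k_1 < ... < k_m = j` with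
  `L k_1 ⋖ L k_2 ≐ ... ≐ L k_{m-1} ⋗ L k_m` such that consecutive `k`'s are adjacent
  or themselves related by `⤳`. -/
  inductive Chain : ℕ → ℕ → Prop where
    | mk {i k j : ℕ} : M.rel (L i) (L k) = some .lt → ChainGap i k → ChainMid k j →
        Chain i j
end

end ChainRel

/-- `(Σ,M)^+`: the set of nonempty words compatible with `M`, i.e. `0 ⤳ |w|+1` in `#w#`. -/
def OPWords (M : OPM A) : Set (List A) :=
  {w | w ≠ [] ∧ Chain M (letterAt w) 0 (w.length + 1)}

/-- An (unweighted) operator precedence automaton over the alphabet `A`. -/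
structure OPA (A : Type) where
  Q : Type
  fin : Fintype Q
  I : Set Q
  F : Set Q
  δpush : Set (Q × A × Q)
  δshift : Set (Q × A × Q)
  δpop : Set (Q × Q × Q)

/-- A weighted operator precedence automaton over the alphabet `A` and weights in `K`. -/
structure WOPA (A K : Type) extends OPA A where
  wtpush : Q × A × Q → K
  wtshift : Q × A × Q → K
  wtpop : Q × Q × Q → K

/-- A configuration: a stack of (symbol, state) pairs, a current state,
and the remaining input. -/
structure Config (A Q : Type) where
  stack : List (A × Q)
  state : Q
  input : List A

/-- The moves (transitions) an OPA may take. -/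
inductive Move (A Q : Type) where
  | push (q : Q) (b : A) (r : Q)
  | shift (q : Q) (b : A) (r : Q)
  | pop (q p r : Q)

/-- The topmost stack symbol (`none` = `#` for the empty stack). -/
def topSym {Q : Type} (st : List (A × Q)) : Option A := st.head?.map Prod.fst

/-- One step of an OPA on an OP alphabet `(A, M)`. -/
inductive Exec (M : OPM A) (T : OPA A) : Config A T.Q → Move A T.Q → Config A T.Q → Prop where
  | push {st : List (A × T.Q)} {q r : T.Q} {b : A} {x : List A} :
      M.rel (topSym st) (some b) = some .lt → (q, b, r) ∈ T.δpush →
      Exec M T ⟨st, q, b :: x⟩ (.push q b r) ⟨(b, q) :: st, r, x⟩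
  | shift {st : List (A × T.Q)} {p q r : T.Q} {a b : A} {x : List A} :
      M.rel (some a) (some b) = some .eq → (q, b, r) ∈ T.δshift →
      Exec M T ⟨(a, p) :: st, q, b :: x⟩ (.shift q b r) ⟨(b, p) :: st, r, x⟩
  | pop {st : List (A × T.Q)} {p q r : T.Q} {a : A} {x : List A} :
      M.rel (some a) x.head? = some .gt → (q, p, r) ∈ T.δpop →
      Exec M T ⟨(a, p) :: st, q, x⟩ (.pop q p r) ⟨st, r, x⟩

/-- Execution of a sequence of moves. -/
inductive ExecList (M : OPM A) (T : OPA A) :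
    Config A T.Q → List (Move A T.Q) → Config A T.Q → Prop where
  | nil (c : Config A T.Q) : ExecList M T c [] c
  | cons {c c' c'' : Config A T.Q} {m : Move A T.Q} {ms : List (Move A T.Q)} :
      Exec M T c m c' → ExecList M T c' ms c'' → ExecList M T c (m :: ms) c''

/-- The weight of a move of a weighted OPA. -/
def moveWt [Semiring K] (W : WOPA A K) : Move A W.Q → K
  | .push q b r => W.wtpush (q, b, r)
  | .shift q b r => W.wtshift (q, b, r)
  | .pop q p r => W.wtpop (q, p, r)

/-- The accepting runs of an OPA on `w`: an initial state, a sequence of moves from the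
initial configuration (empty stack, whole input) to a final configuration
(empty stack, input read), and the final state reached. -/
def AccRuns (M : OPM A) (T : OPA A) (w : List A) : Set (T.Q × List (Move A T.Q) × T.Q) :=
  {ρ | ρ.1 ∈ T.I ∧ ρ.2.2 ∈ T.F ∧ ExecList M T ⟨[], ρ.1, w⟩ ρ.2.1 ⟨[], ρ.2.2, []⟩}

/-- The behavior `⟦W⟧(w)`: the sum over all accepting runs of `W` on `w` of the product
(in order) of the weights of the moves of the run. -/
noncomputable def behavior [Semiring K] (M : OPM A) (W : WOPA A K) (w : List A) : K :=
  ∑ᶠ ρ ∈ AccRuns M W.toOPA w, (ρ.2.1.map (moveWt W)).prod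

/-- A weighted OPA is restricted (an rwOPA) if all pop weights are `1`. -/
def Restricted [Semiring K] (W : WOPA A K) : Prop := ∀ t ∈ W.δpop, W.wtpop t = 1

/-- A series `S : (Σ,M)^+ → K` is regular if it is the behavior of some wOPA. -/
def Regular [Semiring K] (M : OPM A) (S : List A → K) : Prop :=
  ∃ W : WOPA A K, ∀ w ∈ OPWords M, S w = behavior M W w

/-- A series is strictly regular if it is the behavior of some restricted wOPA. -/
def StrictlyRegular [Semiring K] (M : OPM A) (S : List A → K) : Prop :=
  ∃ W : WOPA A K, Restricted W ∧ ∀ w ∈ OPWords M, S w = behavior M W w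

/-- Unweighted acceptance. -/
def Accepts (M : OPM A) (T : OPA A) (w : List A) : Prop :=
  ∃ qI ms qF, qI ∈ T.I ∧ qF ∈ T.F ∧ ExecList M T ⟨[], qI, w⟩ ms ⟨[], qF, []⟩

/-- A language `L ⊆ (Σ,M)^+` is an operator precedence language if it is the set of
compatible words accepted by some OPA. -/
def IsOPL (M : OPM A) (L : Set (List A)) : Prop :=
  ∃ T : OPA A, L = {w | w ∈ OPWords M ∧ Accepts M T w}

/-- The intersection `S ∩ L` of a series with a language. -/
noncomputable def interSeries [Semiring K] (S : List A → K) (L : Set (List A))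
    (w : List A) : K :=
  open Classical in if w ∈ L then S w else 0

/-- `h : Σ → Γ` is OPM-preserving: `a ⊙ b` iff `h(a) ⊙ h(b)` for every relation `⊙`. -/
def OPMPreserving (M : OPM A) (M' : OPM B) (h : A → B) : Prop :=
  ∀ a b : A, M.rel (some a) (some b) = M'.rel (some (h a)) (some (h b))

/-- The image series `h(S)(v) = ∑_{w ∈ (Σ,M)^+, h(w) = v} S(w)`. -/
noncomputable def mapSeries [Semiring K] (M : OPM A) (h : A → B) (S : List A → K)
    (v : List B) : K :=
  ∑ᶠ w ∈ {w | w ∈ OPWords M ∧ w.map h = v}, S w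

/-- The pullback OPM `h⁻¹(M)` along `h : Σ' → Σ`. -/
def pullOPM (M : OPM A) (h : B → A) : OPM B where
  rel o₁ o₂ := M.rel (o₁.map h) (o₂.map h)
  hash_lt b := M.hash_lt (h b)
  hash_gt b := M.hash_gt (h b)

/-- The Nivat class `N(Σ,M,K)`: series obtained from a one-state restricted wOPA over a
pulled-back OP alphabet, intersected with an OPL, followed by the projection. -/
def NivatClass [Semiring K] (M : OPM A) (S : List A → K) : Prop :=
  ∃ (B : Type) (_ : Fintype B) (h : B → A) (W : WOPA B K) (L : Set (List B)),
    Restricted W ∧ (∃ q₀ : W.Q, ∀ q : W.Q, q = q₀) ∧ IsOPL (pullOPM M h) L ∧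
    ∀ v ∈ OPWords M,
      S v = mapSeries (pullOPM M h) h (interSeries (behavior (pullOPM M h) W) L) v

/-- An OPL step function: a finite sum `∑ kᵢ · 1_{Lᵢ}` with the `Lᵢ` OPLs forming a
partition of `(Σ,M)^+`. -/
def IsOPLStep [Semiring K] (M : OPM A) (S : List A → K) : Prop :=
  ∃ (n : ℕ) (k : Fin n → K) (L : Fin n → Set (List A)),
    (∀ i, IsOPL M (L i)) ∧ (∀ i j, i ≠ j → Disjoint (L i) (L j)) ∧
    (⋃ i, L i) = OPWords M ∧ ∀ i, ∀ w ∈ L i, S w = k i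

/-!
Annotate every letter of a word with the transition of `W` that reads it, a push letter also with
the pop transition that will close it. An OPA over annotated letters checks that the annotations
form an accepting run of `W`: it guesses the closing pop at each push and verifies it when the pop
happens. A one-state automaton reads the push and shift weights off the annotations; pop weights
are `1` since `W` is restricted. Operator precedence parsing is deterministic, so the checker and
the one-state automaton have at most one accepting run on a word, and sending a run of `W` on `v`
to its annotated word (computed by reading the run backwards, each pop announcing the annotation
of the push it closes) is a bijection onto the accepted annotated words over `v` that preserves
weights. Summing over it gives `⟦W⟧(v) = h(⟦B⟧ ∩ L)(v)`.
-/

theorem letterAt_map (h : B → A) (w : List B) (i : ℕ) :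
    letterAt (w.map h) i = (letterAt w i).map h := by
  unfold letterAt
  split <;> simp

theorem Chain.of_rel_eq {M₁ : OPM A} {M₂ : OPM B} {L₁ : ℕ → Option A} {L₂ : ℕ → Option B}
    (hrel : ∀ i j, M₁.rel (L₁ i) (L₁ j) = M₂.rel (L₂ i) (L₂ j)) {i j : ℕ}
    (hc : Chain M₁ L₁ i j) : Chain M₂ L₂ i j :=
  Chain.rec (motive_1 := fun k j _ => ChainMid M₂ L₂ k j)
    (motive_2 := fun k j _ => ChainGap M₂ L₂ k j)
    (motive_3 := fun i j _ => Chain M₂ L₂ i j)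
    (fun hgt _ ih => .last (hrel _ _ ▸ hgt) ih)
    (fun heq _ _ ih₁ ih₂ => .step (hrel _ _ ▸ heq) ih₁ ih₂)
    (fun k => .adj k) (fun _ ih => .chain ih)
    (fun hlt _ _ ih₁ ih₂ => .mk (hrel _ _ ▸ hlt) ih₁ ih₂) hc

theorem mem_OPWords_pullOPM (M : OPM A) (h : B → A) (w : List B) :
    w ∈ OPWords (pullOPM M h) ↔ w.map h ∈ OPWords M := by
  have hrel : ∀ i j, (pullOPM M h).rel (letterAt w i) (letterAt w j)
      = M.rel (letterAt (w.map h) i) (letterAt (w.map h) j) := by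
    intro i j
    simp only [letterAt_map]
    rfl
  change (w ≠ [] ∧ _) ↔ (w.map h ≠ [] ∧ _)
  rw [List.length_map, ne_eq, ne_eq, List.map_eq_nil_iff]
  exact and_congr_right fun _ =>
    ⟨Chain.of_rel_eq hrel, Chain.of_rel_eq fun i j => (hrel i j).symm⟩

theorem pullOPM_id (M : OPM A) : pullOPM M id = M := by
  cases M
  simp [pullOPM]

theorem finsum_mem_interSeries [Semiring K] (s L : Set (List A)) (f : List A → K) :
    ∑ᶠ w ∈ s, interSeries f L w = ∑ᶠ w ∈ s ∩ L, f w := by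
  have hind : interSeries f L = L.indicator f := rfl
  rw [hind, finsum_mem_def, Set.indicator_indicator, ← finsum_mem_def]

section Automata

variable {Q Q' : Type}

def Move.map (g : B → A) (f : Q → Q') : Move B Q → Move A Q'
  | .push q b r => .push (f q) (g b) (f r)
  | .shift q b r => .shift (f q) (g b) (f r)
  | .pop q p r => .pop (f q) (f p) (f r)

def Config.map (g : B → A) (f : Q → Q') (c : Config B Q) : Config A Q' :=
  ⟨c.stack.map (Prod.map g f), f c.state, c.input.map g⟩

theorem topSym_map (g : B → A) (f : Q → Q') (st : List (B × Q)) :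
    topSym (st.map (Prod.map g f)) = (topSym st).map g := by
  cases st <;> rfl

structure OPA.IsHom (T : OPA B) (U : OPA A) (g : B → A) (f : T.Q → U.Q) : Prop where
  push : ∀ q b r, (q, b, r) ∈ T.δpush → (f q, g b, f r) ∈ U.δpush
  shift : ∀ q b r, (q, b, r) ∈ T.δshift → (f q, g b, f r) ∈ U.δshift
  pop : ∀ q p r, (q, p, r) ∈ T.δpop → (f q, f p, f r) ∈ U.δpop

variable {M : OPM A} {T : OPA B} {U : OPA A} {g : B → A} {f : T.Q → U.Q}

theorem Exec.map (hφ : T.IsHom U g f) {c c' : Config B T.Q} {m : Move B T.Q}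
    (h : Exec (pullOPM M g) T c m c') : Exec M U (c.map g f) (m.map g f) (c'.map g f) := by
  cases h with
  | push hrel hδ => exact .push (by rw [topSym_map]; exact hrel) (hφ.push _ _ _ hδ)
  | shift hrel hδ => exact .shift hrel (hφ.shift _ _ _ hδ)
  | pop hrel hδ => exact .pop (by rw [List.head?_map]; exact hrel) (hφ.pop _ _ _ hδ)

theorem ExecList.map (hφ : T.IsHom U g f) {c c' : Config B T.Q} {ms : List (Move B T.Q)}
    (h : ExecList (pullOPM M g) T c ms c') :
    ExecList M U (c.map g f) (ms.map (Move.map g f)) (c'.map g f) := by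
  induction h with
  | nil c => exact .nil _
  | cons hstep _ ih => exact .cons (hstep.map hφ) ih

structure OPA.Deterministic (T : OPA A) : Prop where
  push : ∀ q b r r', (q, b, r) ∈ T.δpush → (q, b, r') ∈ T.δpush → r = r'
  shift : ∀ q b r r', (q, b, r) ∈ T.δshift → (q, b, r') ∈ T.δshift → r = r'
  pop : ∀ q p r r', (q, p, r) ∈ T.δpop → (q, p, r') ∈ T.δpop → r = r'

variable {T : OPA A}

/-- At most one of `⋖`, `≐`, `⋗` holds between the top of the stack and the lookahead, so only
one kind of move applies. -/
theorem Exec.unique (hT : T.Deterministic) {c c₁ c₂ : Config A T.Q} {m₁ m₂ : Move A T.Q}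
    (h₁ : Exec M T c m₁ c₁) (h₂ : Exec M T c m₂ c₂) : m₁ = m₂ ∧ c₁ = c₂ := by
  cases h₁ with
  | push hrel hδ =>
    cases h₂ with
    | push _ hδ' => obtain rfl := hT.push _ _ _ _ hδ hδ'; exact ⟨rfl, rfl⟩
    | shift hrel' _ => simp_all [topSym]
    | pop hrel' _ => simp_all [topSym]
  | shift hrel hδ =>
    cases h₂ with
    | push hrel' _ => simp_all [topSym]
    | shift _ hδ' => obtain rfl := hT.shift _ _ _ _ hδ hδ'; exact ⟨rfl, rfl⟩
    | pop hrel' _ => simp_all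
  | pop hrel hδ =>
    cases h₂ with
    | push hrel' _ => simp_all [topSym]
    | shift hrel' _ => simp_all
    | pop _ hδ' => obtain rfl := hT.pop _ _ _ _ hδ hδ'; exact ⟨rfl, rfl⟩

theorem not_exec_terminal {q : T.Q} {m : Move A T.Q} {c : Config A T.Q} :
    ¬ Exec M T ⟨[], q, []⟩ m c := by
  rintro (_ | _ | _)

theorem ExecList.unique (hT : T.Deterministic) {c : Config A T.Q} {q₁ q₂ : T.Q}
    {ms₁ ms₂ : List (Move A T.Q)} (h₁ : ExecList M T c ms₁ ⟨[], q₁, []⟩)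
    (h₂ : ExecList M T c ms₂ ⟨[], q₂, []⟩) : ms₁ = ms₂ ∧ q₁ = q₂ := by
  generalize hc₁ : (⟨[], q₁, []⟩ : Config A T.Q) = c₁ at h₁
  induction h₁ generalizing ms₂ with
  | nil c =>
    subst hc₁
    cases h₂ with
    | nil => exact ⟨rfl, rfl⟩
    | cons hstep _ => exact absurd hstep not_exec_terminal
  | cons hstep _ ih =>
    cases h₂ with
    | nil => subst hc₁; exact absurd hstep not_exec_terminal
    | cons hstep' hrest' =>
      obtain ⟨rfl, rfl⟩ := hstep.unique hT hstep'
      obtain ⟨rfl, rfl⟩ := ih hrest' hc₁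
      exact ⟨rfl, rfl⟩

theorem ExecList.exists_push {s t : T.Q} {b : A} {x : List A} {ms : List (Move A T.Q)}
    (h : ExecList M T ⟨[], s, b :: x⟩ ms ⟨[], t, []⟩) : ∃ r, (s, b, r) ∈ T.δpush := by
  rcases h with _ | ⟨hstep, _⟩
  rcases hstep with ⟨_, hδ⟩ | _ | _
  exact ⟨_, hδ⟩

theorem accRuns_subsingleton (hT : T.Deterministic)
    (hI : ∀ s ∈ T.I, ∀ s' ∈ T.I, ∀ b r r', (s, b, r) ∈ T.δpush → (s', b, r') ∈ T.δpush → s = s')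
    {w : List A} (hw : w ≠ []) : (AccRuns M T w).Subsingleton := by
  obtain ⟨b, x, rfl⟩ := List.exists_cons_of_ne_nil hw
  rintro ⟨s, ms, t⟩ ⟨hs, -, h⟩ ⟨s', ms', t'⟩ ⟨hs', -, h'⟩
  obtain ⟨r, hr⟩ := h.exists_push
  obtain ⟨r', hr'⟩ := h'.exists_push
  obtain rfl := hI s hs s' hs' b r r' hr hr'
  obtain ⟨rfl, rfl⟩ := h.unique hT h'
  rfl

theorem behavior_eq_of_mem_accRuns [Semiring K] {W : WOPA A K} {w : List A}
    {ρ : W.Q × List (Move A W.Q) × W.Q} (hsub : (AccRuns M W.toOPA w).Subsingleton)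
    (hρ : ρ ∈ AccRuns M W.toOPA w) : behavior M W w = (ρ.2.1.map (moveWt W)).prod := by
  rw [behavior, hsub.eq_singleton_of_mem hρ, finsum_mem_singleton]

end Automata

namespace WOPA

variable (W : WOPA A K)

/-- A push letter `(a, inl (q, r, c, d))` records the push `(q, a, r)` and the pop `(c, q, d)`
that later removes it; a shift letter `(a, inr (q, r))` records the shift `(q, a, r)`. -/
abbrev AnnLetter : Type := A × ((W.Q × W.Q × W.Q × W.Q) ⊕ (W.Q × W.Q))

/-- The second state component is the pop `(c, d)` announced by the innermost open push letter
(`none` below the outermost one); the pop move checks it and restores the announcement stored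
with the popped stack entry. -/
@[reducible] def runChecker : OPA W.AnnLetter where
  Q := W.Q × Option (W.Q × W.Q)
  fin := have := W.fin; inferInstance
  I := {s | s.1 ∈ W.I ∧ s.2 = none}
  F := {s | s.1 ∈ W.F ∧ s.2 = none}
  δpush := {t | ∃ q e a r c d, t = ((q, e), (a, .inl (q, r, c, d)), (r, some (c, d))) ∧
    (q, a, r) ∈ W.δpush}
  δshift := {t | ∃ q e a r, t = ((q, e), (a, .inr (q, r)), (r, e)) ∧ (q, a, r) ∈ W.δshift}
  δpop := {t | ∃ c d p e, t = ((c, some (c, d)), (p, e), (d, e)) ∧ (c, p, d) ∈ W.δpop}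

@[reducible] def weightReader [Semiring K] : WOPA W.AnnLetter K where
  Q := Unit
  fin := inferInstance
  I := Set.univ
  F := Set.univ
  δpush := Set.univ
  δshift := Set.univ
  δpop := Set.univ
  wtpush t := match t.2.1.2 with
    | .inl (q, r, _, _) => W.wtpush (q, t.2.1.1, r)
    | .inr _ => 1
  wtshift t := match t.2.1.2 with
    | .inl _ => 1
    | .inr (q, r) => W.wtshift (q, t.2.1.1, r)
  wtpop _ := 1

theorem runChecker_isHom : W.runChecker.IsHom W.toOPA Prod.fst Prod.fst where
  push := by rintro _ _ _ ⟨q, e, a, r, c, d, ⟨⟩, hδ⟩; exact hδ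
  shift := by rintro _ _ _ ⟨q, e, a, r, ⟨⟩, hδ⟩; exact hδ
  pop := by rintro _ _ _ ⟨c, d, p, e, ⟨⟩, hδ⟩; exact hδ

theorem runChecker_deterministic : W.runChecker.Deterministic where
  push := by
    rintro _ _ _ _ ⟨_, _, _, _, _, _, ⟨⟩, -⟩ ⟨_, _, _, _, _, _, ⟨⟩, -⟩
    rfl
  shift := by
    rintro _ _ _ _ ⟨_, _, _, _, ⟨⟩, -⟩ ⟨_, _, _, _, ⟨⟩, -⟩
    rfl
  pop := by
    rintro _ _ _ _ ⟨_, _, _, _, ⟨⟩, -⟩ ⟨_, _, _, _, ⟨⟩, -⟩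
    rfl

theorem runChecker_initial_eq {s s' : W.runChecker.Q} (hs : s ∈ W.runChecker.I)
    (hs' : s' ∈ W.runChecker.I) {b : W.AnnLetter} {r r' : W.runChecker.Q}
    (h : (s, b, r) ∈ W.runChecker.δpush) (h' : (s', b, r') ∈ W.runChecker.δpush) : s = s' := by
  obtain ⟨_, _, _, _, _, _, ⟨⟩, -⟩ := h
  obtain ⟨_, _, _, _, _, _, ⟨⟩, -⟩ := h'
  exact Prod.ext rfl (hs.2.trans hs'.2.symm)

theorem accRuns_runChecker_subsingleton {M : OPM A} {w : List W.AnnLetter} (hw : w ≠ []) :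
    (AccRuns (pullOPM M Prod.fst) W.runChecker w).Subsingleton :=
  accRuns_subsingleton W.runChecker_deterministic
    (fun _ hs _ hs' _ _ _ => W.runChecker_initial_eq hs hs') hw

section Weights

variable [Semiring K]

theorem weightReader_deterministic : (W.weightReader (K := K)).Deterministic :=
  ⟨fun _ _ _ _ _ _ => rfl, fun _ _ _ _ _ _ => rfl, fun _ _ _ _ _ _ => rfl⟩

theorem runChecker_isHom_weightReader :
    W.runChecker.IsHom (W.weightReader (K := K)).toOPA id fun _ => () :=
  ⟨fun _ _ _ _ => trivial, fun _ _ _ _ => trivial, fun _ _ _ _ => trivial⟩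

variable {M : OPM A}

theorem moveWt_weightReader (hres : Restricted W) {c c' : Config W.AnnLetter W.runChecker.Q}
    {m : Move W.AnnLetter W.runChecker.Q} (h : Exec (pullOPM M Prod.fst) W.runChecker c m c') :
    moveWt W.weightReader (m.map id fun _ => ()) = moveWt W (m.map Prod.fst Prod.fst) := by
  rcases h with ⟨_, ⟨_, _, _, _, _, _, ⟨⟩, -⟩⟩ | ⟨_, ⟨_, _, _, _, ⟨⟩, -⟩⟩ |
    ⟨_, ⟨_, _, _, _, ⟨⟩, hδ⟩⟩
  · rfl
  · rfl
  · exact (hres _ hδ).symm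

theorem prod_moveWt_weightReader (hres : Restricted W)
    {c c' : Config W.AnnLetter W.runChecker.Q} {ms : List (Move W.AnnLetter W.runChecker.Q)}
    (h : ExecList (pullOPM M Prod.fst) W.runChecker c ms c') :
    ((ms.map (Move.map id fun _ => ())).map (moveWt W.weightReader)).prod
      = ((ms.map (Move.map Prod.fst Prod.fst)).map (moveWt W)).prod := by
  induction h with
  | nil => rfl
  | cons hstep _ ih =>
    simp only [List.map_cons, List.prod_cons, W.moveWt_weightReader hres hstep, ih]

end Weights

section Annotation

variable {M : OPM A}

def pendings (c : Config W.AnnLetter W.runChecker.Q) : List (Option (W.Q × W.Q)) :=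
  c.state.2 :: c.stack.map fun x => x.2.2

/-- Reads a run of `W` backwards, each pop announcing the annotation of the push letter it
closes. Arguments not arising from a run give `([], [])`, which is never of the form
`(c.input, W.pendings c)`. -/
def annotStep : Move A W.Q → List W.AnnLetter × List (Option (W.Q × W.Q)) →
    List W.AnnLetter × List (Option (W.Q × W.Q))
  | .push q a r, (x, some (c, d) :: es) => ((a, .inl (q, r, c, d)) :: x, es)
  | .push _ _ _, _ => ([], [])
  | .shift q a r, (x, es) => ((a, .inr (q, r)) :: x, es)
  | .pop c _ d, (x, es) => (x, some (c, d) :: es)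

def annotate (ms : List (Move A W.Q)) : List W.AnnLetter :=
  (ms.foldr W.annotStep ([], [none])).1

theorem annotStep_of_exec {c c' : Config W.AnnLetter W.runChecker.Q}
    {m : Move W.AnnLetter W.runChecker.Q} (h : Exec (pullOPM M Prod.fst) W.runChecker c m c') :
    W.annotStep (m.map Prod.fst Prod.fst) (c'.input, W.pendings c') = (c.input, W.pendings c) := by
  rcases h with ⟨_, ⟨_, _, _, _, _, _, ⟨⟩, -⟩⟩ | ⟨_, ⟨_, _, _, _, ⟨⟩, -⟩⟩ |
    ⟨_, ⟨_, _, _, _, ⟨⟩, -⟩⟩ <;> rfl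

theorem foldr_annotStep_of_execList {c c' : Config W.AnnLetter W.runChecker.Q}
    {ms : List (Move W.AnnLetter W.runChecker.Q)}
    (h : ExecList (pullOPM M Prod.fst) W.runChecker c ms c') :
    (ms.map (Move.map Prod.fst Prod.fst)).foldr W.annotStep (c'.input, W.pendings c')
      = (c.input, W.pendings c) := by
  induction h with
  | nil => rfl
  | cons hstep _ ih => rw [List.map_cons, List.foldr_cons, ih, W.annotStep_of_exec hstep]

theorem exists_foldr_annotStep_eq {c cf : Config A W.Q} {ms : List (Move A W.Q)}
    (h : ExecList M W.toOPA c ms cf) (hs : cf.stack = []) (hi : cf.input = []) :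
    ∃ (w : List W.AnnLetter) (L : List (W.Q × W.Q)),
      ms.foldr W.annotStep ([], [none]) = (w, L.map some ++ [none]) ∧
        w.map Prod.fst = c.input ∧ L.length = c.stack.length := by
  induction h with
  | nil => exact ⟨[], [], rfl, by simp [hi], by simp [hs]⟩
  | cons hstep _ ih =>
    obtain ⟨w, L, hfold, hw, hL⟩ := ih hs hi
    rcases hstep with @⟨st, q, r, a, x, -, -⟩ | @⟨st, p, q, r, a, b, x, -, -⟩ |
      @⟨st, p, q, r, a, x, -, -⟩
    · obtain ⟨⟨c, d⟩, L, rfl⟩ := List.exists_cons_of_length_eq_add_one hL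
      exact ⟨(a, .inl (q, r, c, d)) :: w, L, by simp [hfold, annotStep], by simp [hw],
        by simpa using hL⟩
    · exact ⟨(b, .inr (q, r)) :: w, L, by simp [hfold, annotStep], by simp [hw],
        by simpa using hL⟩
    · exact ⟨w, (q, r) :: L, by simp [hfold, annotStep], hw, by simpa using hL⟩

theorem exists_exec_runChecker {c c₁ : Config A W.Q} {m : Move A W.Q}
    (h : Exec M W.toOPA c m c₁) {c' : Config W.AnnLetter W.runChecker.Q}
    (hc : c'.map Prod.fst Prod.fst = c) {view : List W.AnnLetter × List (Option (W.Q × W.Q))}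
    (hp : W.annotStep m view = (c'.input, W.pendings c')) :
    ∃ m' c₁', m'.map Prod.fst Prod.fst = m ∧ c₁'.map Prod.fst Prod.fst = c₁ ∧
      (c₁'.input, W.pendings c₁') = view ∧ Exec (pullOPM M Prod.fst) W.runChecker c' m' c₁' := by
  obtain ⟨st', ⟨q', e⟩, x'⟩ := c'
  obtain ⟨y, P⟩ := view
  rcases h with @⟨st, q, r, a, x, hrel, hδ⟩ | @⟨st, p, q, r, a, b, x, hrel, hδ⟩ |
    @⟨st, p, q, r, a, x, hrel, hδ⟩ <;>
    simp only [Config.map, Config.mk.injEq] at hc <;> obtain ⟨hst, rfl, hx⟩ := hc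
  · subst hst
    rcases P with _ | ⟨_ | ⟨c, d⟩, es⟩ <;>
      simp only [annotStep, pendings, Prod.mk.injEq, reduceCtorEq, and_false] at hp
    obtain ⟨rfl, rfl⟩ := hp
    refine ⟨.push (q', e) (a, .inl (q', r, c, d)) (r, some (c, d)),
      ⟨((a, .inl (q', r, c, d)), (q', e)) :: st', (r, some (c, d)), y⟩, rfl, ?_, rfl,
      .push ?_ ⟨_, _, _, _, _, _, rfl, hδ⟩⟩
    · simp_all [Config.map]
    · rwa [topSym_map] at hrel
  · rcases st' with _ | ⟨⟨⟨a', α⟩, ⟨p', e'⟩⟩, st'⟩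
    · simp at hst
    simp only [List.map_cons, Prod.map, List.cons.injEq, Prod.mk.injEq] at hst
    obtain ⟨⟨rfl, rfl⟩, rfl⟩ := hst
    simp only [annotStep, pendings, Prod.mk.injEq] at hp
    obtain ⟨rfl, rfl⟩ := hp
    refine ⟨.shift (q', e) (b, .inr (q', r)) (r, e),
      ⟨((b, .inr (q', r)), (p', e')) :: st', (r, e), y⟩, rfl, ?_, rfl,
      .shift hrel ⟨_, _, _, _, rfl, hδ⟩⟩
    simp_all [Config.map]
  · rcases st' with _ | ⟨⟨⟨a', α⟩, ⟨p', e'⟩⟩, st'⟩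
    · simp at hst
    simp only [List.map_cons, Prod.map, List.cons.injEq, Prod.mk.injEq] at hst
    obtain ⟨⟨rfl, rfl⟩, rfl⟩ := hst
    simp only [annotStep, pendings, Prod.mk.injEq, List.cons.injEq] at hp
    obtain ⟨rfl, rfl, rfl⟩ := hp
    refine ⟨.pop (q', some (q', r)) (p', e') (r, e'), ⟨st', (r, e'), y⟩, rfl, ?_, rfl,
      .pop ?_ ⟨_, _, _, _, rfl, hδ⟩⟩
    · simp [Config.map, hx]
    · rwa [← hx, List.head?_map] at hrel

theorem exists_execList_runChecker {c cf : Config A W.Q} {ms : List (Move A W.Q)}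
    (h : ExecList M W.toOPA c ms cf) {c' : Config W.AnnLetter W.runChecker.Q}
    (hc : c'.map Prod.fst Prod.fst = c)
    (hp : ms.foldr W.annotStep ([], [none]) = (c'.input, W.pendings c')) :
    ∃ ns, ns.map (Move.map Prod.fst Prod.fst) = ms ∧
      ExecList (pullOPM M Prod.fst) W.runChecker c' ns ⟨[], (cf.state, none), []⟩ := by
  induction h generalizing c' with
  | nil =>
    obtain ⟨st', ⟨q', e⟩, x'⟩ := c'
    simp only [List.foldr_nil, pendings, Prod.mk.injEq, List.cons.injEq, List.nil_eq,
      List.map_eq_nil_iff] at hp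
    obtain ⟨rfl, rfl, rfl⟩ := hp
    subst hc
    exact ⟨[], rfl, .nil _⟩
  | cons hstep _ ih =>
    obtain ⟨m', c₁', hm, hc₁, hp₁, hstep'⟩ := W.exists_exec_runChecker hstep hc hp
    obtain ⟨ns, hns, hrest⟩ := ih hc₁ hp₁.symm
    exact ⟨m' :: ns, by rw [List.map_cons, hm, hns], .cons hstep' hrest⟩

theorem exists_mem_accRuns_runChecker {v : List A} {ρ : W.Q × List (Move A W.Q) × W.Q}
    (hρ : ρ ∈ AccRuns M W.toOPA v) :
    (W.annotate ρ.2.1).map Prod.fst = v ∧ ∃ ns, ns.map (Move.map Prod.fst Prod.fst) = ρ.2.1 ∧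
      ((ρ.1, none), ns, (ρ.2.2, none)) ∈ AccRuns (pullOPM M Prod.fst) W.runChecker
        (W.annotate ρ.2.1) := by
  obtain ⟨qI, ms, qF⟩ := ρ
  obtain ⟨hI, hF, h⟩ := hρ
  obtain ⟨w, L, hfold, hw, hL⟩ := W.exists_foldr_annotStep_eq h rfl rfl
  obtain rfl : L = [] := List.eq_nil_of_length_eq_zero hL
  have hann : W.annotate ms = w := by rw [annotate, hfold]
  obtain ⟨ns, hns, hrun⟩ := W.exists_execList_runChecker h (c' := ⟨[], (qI, none), w⟩)
    (by simp [Config.map, hw]) (by simp [hfold, pendings])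
  rw [hann]
  exact ⟨hw, ns, hns, ⟨hI, rfl⟩, ⟨hF, rfl⟩, hrun⟩

theorem annotate_of_mem_accRuns {w : List W.AnnLetter}
    {ρ : W.runChecker.Q × List (Move W.AnnLetter W.runChecker.Q) × W.runChecker.Q}
    (hρ : ρ ∈ AccRuns (pullOPM M Prod.fst) W.runChecker w) :
    W.annotate (ρ.2.1.map (Move.map Prod.fst Prod.fst)) = w := by
  obtain ⟨s, ns, ⟨qF, e⟩⟩ := ρ
  obtain ⟨-, ⟨-, rfl⟩, h⟩ := hρ
  exact congrArg Prod.fst (W.foldr_annotStep_of_execList h)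

theorem map_mem_accRuns_runChecker {w : List W.AnnLetter}
    {ρ : W.runChecker.Q × List (Move W.AnnLetter W.runChecker.Q) × W.runChecker.Q}
    (hρ : ρ ∈ AccRuns (pullOPM M Prod.fst) W.runChecker w) :
    (ρ.1.1, ρ.2.1.map (Move.map Prod.fst Prod.fst), ρ.2.2.1) ∈
      AccRuns M W.toOPA (w.map Prod.fst) :=
  ⟨hρ.1.1, hρ.2.1.1, hρ.2.2.map W.runChecker_isHom⟩

end Annotation

variable [Semiring K] {M : OPM A}

theorem behavior_weightReader (hres : Restricted W) {w : List W.AnnLetter} (hw : w ≠ [])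
    {ρ : W.runChecker.Q × List (Move W.AnnLetter W.runChecker.Q) × W.runChecker.Q}
    (hρ : ρ ∈ AccRuns (pullOPM M Prod.fst) W.runChecker w) :
    behavior (pullOPM M Prod.fst) W.weightReader w
      = ((ρ.2.1.map (Move.map Prod.fst Prod.fst)).map (moveWt W)).prod := by
  have hrun : ExecList (pullOPM (pullOPM M Prod.fst) id) W.runChecker ⟨[], ρ.1, w⟩ ρ.2.1
      ⟨[], ρ.2.2, []⟩ := by
    rw [pullOPM_id]
    exact hρ.2.2
  have hcollapse : ((), ρ.2.1.map (Move.map id fun _ => ()), ()) ∈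
      AccRuns (pullOPM M Prod.fst) W.weightReader.toOPA w := by
    have h := hrun.map W.runChecker_isHom_weightReader
    simp only [Config.map, List.map_nil, List.map_id] at h
    exact ⟨trivial, trivial, h⟩
  rw [behavior_eq_of_mem_accRuns (accRuns_subsingleton W.weightReader_deterministic
    (fun _ _ _ _ _ _ _ _ _ => rfl) hw) hcollapse]
  exact W.prod_moveWt_weightReader hres hρ.2.2

theorem behavior_eq_mapSeries (hres : Restricted W) {v : List A} (hv : v ∈ OPWords M) :
    behavior M W v = mapSeries (pullOPM M Prod.fst) Prod.fst
      (interSeries (behavior (pullOPM M Prod.fst) W.weightReader)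
        {w | w ∈ OPWords (pullOPM M Prod.fst) ∧ Accepts (pullOPM M Prod.fst) W.runChecker w})
        v := by
  have hne {ρ : W.Q × List (Move A W.Q) × W.Q} (hρ : ρ ∈ AccRuns M W.toOPA v) :
      W.annotate ρ.2.1 ≠ [] := by
    rw [ne_eq, ← List.map_eq_nil_iff (f := Prod.fst), (W.exists_mem_accRuns_runChecker hρ).1]
    exact hv.1
  rw [mapSeries, finsum_mem_interSeries, behavior]
  refine finsum_mem_eq_of_bijOn (fun ρ => W.annotate ρ.2.1) ⟨?_, ?_, ?_⟩ ?_
  · intro ρ hρ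
    obtain ⟨hmap, _, -, hrun⟩ := W.exists_mem_accRuns_runChecker hρ
    have hw := (mem_OPWords_pullOPM M Prod.fst _).2 (hmap ▸ hv)
    exact ⟨⟨hw, hmap⟩, hw, _, _, _, hrun⟩
  · intro ρ₁ hρ₁ ρ₂ hρ₂ heq
    obtain ⟨-, ns₁, hns₁, hrun₁⟩ := W.exists_mem_accRuns_runChecker hρ₁
    obtain ⟨-, ns₂, hns₂, hrun₂⟩ := W.exists_mem_accRuns_runChecker hρ₂
    rw [show W.annotate ρ₁.2.1 = W.annotate ρ₂.2.1 from heq] at hrun₁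
    have := W.accRuns_runChecker_subsingleton (hne hρ₂) hrun₁ hrun₂
    simp only [Prod.mk.injEq, and_true] at this
    obtain ⟨hI, rfl, hF⟩ := this
    exact Prod.ext hI (Prod.ext (hns₁.symm.trans hns₂) hF)
  · rintro w ⟨⟨-, rfl⟩, -, s, ns, t, hs, ht, hrun⟩
    have hρ : (s, ns, t) ∈ AccRuns _ W.runChecker w := ⟨hs, ht, hrun⟩
    exact ⟨_, W.map_mem_accRuns_runChecker hρ, W.annotate_of_mem_accRuns hρ⟩
  · intro ρ hρ
    obtain ⟨-, ns, hns, hrun⟩ := W.exists_mem_accRuns_runChecker hρ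
    rw [W.behavior_weightReader hres (hne hρ) hrun, hns]

end WOPA

/-- Every strictly regular series belongs to the Nivat class `N(Σ,M,K)`. -/
theorem strictlyRegular_mem_nivat {A K : Type} [Fintype A] [Semiring K] (M : OPM A)
    (S : List A → K) (hS : StrictlyRegular M S) : NivatClass M S := by
  obtain ⟨W, hres, hS⟩ := hS
  have := W.fin
  exact ⟨W.AnnLetter, inferInstance, Prod.fst, W.weightReader, _, fun _ _ => rfl,
    ⟨(), fun _ => rfl⟩, ⟨W.runChecker, rfl⟩,
    fun v hv => (hS v hv).trans (W.behavior_eq_mapSeries hres hv)⟩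
end WOP
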